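/- Let φ be an injective self-map of the (q+1)-homogeneous rooted tree T with q ≥ 2, and let 1 ≤ p < ∞. Then the composition operator C_φ is bounded on T_p if and only if there exists M > 0 such that |φ(v)| ≤ |v| + M for all v ∈ T. -/

import Mathlib

open scoped BigOperators Classical

noncomputable section

/-- `treeC q n` is the number `c_n` of vertices at level `n` of the
`(q+1)`-homogeneous rooted tree: `c_0 = 1` and `c_n = (q+1) q^(n-1)` for `n ≥ 1`. -/
def treeC (q n : ℕ) : ℕ := if n = 0 then 1 else (q + 1) * q ^ (n - 1)

/-- An abstract `(q+1)`-homogeneous rooted tree, described by its vertex set, root,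
level function `|·|` (graph distance to the root), and the level counts:
level `n` contains exactly `c_n = treeC q n` vertices. -/
structure HomTree (q : ℕ) where
  V : Type
  root : V
  level : V → ℕ
  level_eq_zero_iff : ∀ v : V, level v = 0 ↔ v = root
  finiteLevel : ∀ n : ℕ, {v : V | level v = n}.Finite
  card_level : ∀ n : ℕ, (finiteLevel n).toFinset.card = treeC q n

namespace HomTree

variable {q : ℕ} (T : HomTree q)

/-- The set `D_n` of vertices of level `n`, as a finset. -/
def levelFinset (n : ℕ) : Finset T.V := (T.finiteLevel n).toFinset

/-- `M_p(n, f)` for `0 < p < ∞`: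
`M_p(n,f) = ((1/c_n) ∑_{|v|=n} |f v|^p)^(1/p)` (which equals `|f o|` for `n = 0`). -/
def Mp (p : ℝ) (n : ℕ) (f : T.V → ℂ) : ℝ :=
  ((1 / (treeC q n : ℝ)) * ∑ v ∈ T.levelFinset n, ‖f v‖ ^ p) ^ (1 / p)

/-- `M_∞(n, f) = max_{|v| = n} |f v|`. -/
def Minf (n : ℕ) (f : T.V → ℂ) : ℝ :=
  sSup ((fun v => ‖f v‖) '' {v : T.V | T.level v = n})

/-- `f ∈ T_p`, i.e. `‖f‖_p = sup_n M_p(n,f) < ∞`. -/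
def memTp (p : ℝ) (f : T.V → ℂ) : Prop := BddAbove (Set.range fun n => T.Mp p n f)

/-- `‖f‖_p = sup_n M_p(n, f)`. -/
def normTp (p : ℝ) (f : T.V → ℂ) : ℝ := ⨆ n, T.Mp p n f

/-- `f ∈ T_∞`. -/
def memTinf (f : T.V → ℂ) : Prop := BddAbove (Set.range fun n => T.Minf n f)

/-- `‖f‖_∞ = sup_n M_∞(n, f)`. -/
def normTinf (f : T.V → ℂ) : ℝ := ⨆ n, T.Minf n f

/-- `f ∈ T_{p,0}`: `f ∈ T_p` and `M_p(n,f) → 0` as `n → ∞`. -/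
def memTp0 (p : ℝ) (f : T.V → ℂ) : Prop :=
  T.memTp p f ∧ Filter.Tendsto (fun n => T.Mp p n f) Filter.atTop (nhds 0)

/-- `f ∈ T_{∞,0}`. -/
def memTinf0 (f : T.V → ℂ) : Prop :=
  T.memTinf f ∧ Filter.Tendsto (fun n => T.Minf n f) Filter.atTop (nhds 0)

/-- `N_φ(n, w)`: the number of preimages of `w` under `φ` at level `n`. -/
def Nphi (phi : T.V → T.V) (n : ℕ) (w : T.V) : ℕ :=
  ((T.levelFinset n).filter fun v => phi v = w).card

/-- `N_{m,n} = max_{|w| = m} N_φ(n, w)`. -/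
def Nmax (phi : T.V → T.V) (m n : ℕ) : ℕ :=
  (T.levelFinset m).sup fun w => T.Nphi phi n w

/-- `C_φ` is a bounded operator on `T_p`: it maps `T_p` into `T_p` and
`‖f ∘ φ‖_p ≤ C ‖f‖_p` for some constant `C`. -/
def BoundedCompTp (p : ℝ) (phi : T.V → T.V) : Prop :=
  (∀ f : T.V → ℂ, T.memTp p f → T.memTp p (f ∘ phi)) ∧
  ∃ C : ℝ, ∀ f : T.V → ℂ, T.memTp p f → T.normTp p (f ∘ phi) ≤ C * T.normTp p f

/-- The operator norm of `C_φ` on `T_p`: `sup {‖f ∘ φ‖_p : f ∈ T_p, ‖f‖_p = 1}`. -/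
def opNormTp (p : ℝ) (phi : T.V → T.V) : ℝ :=
  sSup {x : ℝ | ∃ f : T.V → ℂ, T.memTp p f ∧ T.normTp p f = 1 ∧ x = T.normTp p (f ∘ phi)}

/-- `C_φ` is a bounded operator on `T_{p,0}`. -/
def BoundedCompTp0 (p : ℝ) (phi : T.V → T.V) : Prop :=
  (∀ f : T.V → ℂ, T.memTp0 p f → T.memTp0 p (f ∘ phi)) ∧
  ∃ C : ℝ, ∀ f : T.V → ℂ, T.memTp0 p f → T.normTp p (f ∘ phi) ≤ C * T.normTp p f

/-- The operator norm of `C_φ` on `T_{p,0}`. -/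
def opNormTp0 (p : ℝ) (phi : T.V → T.V) : ℝ :=
  sSup {x : ℝ | ∃ f : T.V → ℂ, T.memTp0 p f ∧ T.normTp p f = 1 ∧ x = T.normTp p (f ∘ phi)}

/-- `C_φ` is a bounded operator on `T_{∞,0}`. -/
def BoundedCompTinf0 (phi : T.V → T.V) : Prop :=
  (∀ f : T.V → ℂ, T.memTinf0 f → T.memTinf0 (f ∘ phi)) ∧
  ∃ C : ℝ, ∀ f : T.V → ℂ, T.memTinf0 f → T.normTinf (f ∘ phi) ≤ C * T.normTinf f

end HomTree

/-!
If `|φ v| ≤ |v| + M`, injectivity sends level `n` one-to-one into the levels `≤ n + M`, so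
`∑_{|v|=n} |f(φ v)|^p ≤ (c_0 + ⋯ + c_{n+M}) ‖f‖_p^p ≤ 2 (q+1) q^M c_n ‖f‖_p^p`, the level sizes
growing at least geometrically with ratio `q ≥ 2`. Conversely, testing `C_φ` on the point mass at
`φ v` normalized to `‖·‖_p = 1` gives `c_{|φ v|} ≤ ‖C_φ‖^p c_{|v|}`, whereas
`c_{|φ v|} ≥ q^{|φ v| - |v|} c_{|v|}`; hence `|φ v| - |v|` is bounded.
-/

lemma treeC_pos {q : ℕ} (hq : 1 ≤ q) (n : ℕ) : 0 < treeC q n := by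
  unfold treeC
  split_ifs
  · exact one_pos
  · positivity

lemma pow_mul_treeC_le (q n j : ℕ) : q ^ j * treeC q n ≤ treeC q (n + j) := by
  unfold treeC
  rcases j with _ | j
  · simp
  rcases Nat.eq_zero_or_pos n with rfl | hn
  · simp only [↓reduceIte, mul_one, zero_add, Nat.add_one_sub_one, pow_succ']
    exact Nat.mul_le_mul_right _ (Nat.le_succ q)
  · rw [if_neg hn.ne', if_neg (by omega), show n + (j + 1) - 1 = (j + 1) + (n - 1) by omega,
      pow_add]
    exact le_of_eq (by ring)

lemma treeC_add_le {q : ℕ} (hq : 1 ≤ q) (n j : ℕ) :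
    treeC q (n + j) ≤ (q + 1) * q ^ j * treeC q n := by
  unfold treeC
  rcases Nat.eq_zero_or_pos n with rfl | hn
  · simp only [zero_add, ↓reduceIte, mul_one]
    split_ifs with hj
    · simp [hj]
    · exact Nat.mul_le_mul_left _ (Nat.pow_le_pow_right hq (by omega))
  · rw [if_neg hn.ne', if_neg (by omega), show n + j - 1 = j + (n - 1) by omega, pow_add]
    calc (q + 1) * (q ^ j * q ^ (n - 1)) = (q + 1) * q ^ j * (1 * q ^ (n - 1)) := by ring
      _ ≤ (q + 1) * q ^ j * ((q + 1) * q ^ (n - 1)) := by gcongr; omega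

lemma sum_range_treeC_le {q : ℕ} (hq : 2 ≤ q) (N : ℕ) :
    ∑ m ∈ Finset.range (N + 1), treeC q m ≤ 2 * treeC q N := by
  induction N with
  | zero => simp [treeC]
  | succ N ih =>
    have hnext : q * treeC q N ≤ treeC q (N + 1) := by
      simpa using pow_mul_treeC_le q N 1
    rw [Finset.sum_range_succ]
    nlinarith

lemma exists_le_add_of_treeC_le {q : ℕ} (hq : 2 ≤ q) (C : ℝ) :
    ∃ M, 0 < M ∧ ∀ n k, (treeC q k : ℝ) ≤ C * treeC q n → k ≤ n + M := by
  obtain ⟨M, hM⟩ := pow_unbounded_of_one_lt C one_lt_two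
  refine ⟨M + 1, M.succ_pos, fun n k hnk => ?_⟩
  by_contra! hk
  have hgrowth : 2 ^ M * treeC q n ≤ treeC q k :=
    calc 2 ^ M * treeC q n ≤ q ^ (k - n) * treeC q n := by gcongr <;> omega
      _ ≤ treeC q (n + (k - n)) := pow_mul_treeC_le q n (k - n)
      _ = treeC q k := by congr 1; omega
  have hc : (0 : ℝ) < treeC q n := by exact_mod_cast treeC_pos (by omega) n
  have hle : (2 : ℝ) ^ M * treeC q n ≤ C * treeC q n := le_trans (by exact_mod_cast hgrowth) hnk
  exact (mul_lt_mul_of_pos_right hM hc).not_ge hle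

namespace HomTree

variable {q : ℕ} (T : HomTree q)

lemma mem_levelFinset {n : ℕ} {v : T.V} : v ∈ T.levelFinset n ↔ T.level v = n := by
  simp [levelFinset]

lemma pairwiseDisjoint_levelFinset (s : Set ℕ) : s.PairwiseDisjoint T.levelFinset :=
  fun _ _ _ _ hab => Finset.disjoint_left.2 fun _ ha hb =>
    hab (((T.mem_levelFinset).1 ha).symm.trans ((T.mem_levelFinset).1 hb))

lemma Mp_nonneg (p : ℝ) (n : ℕ) (f : T.V → ℂ) : 0 ≤ T.Mp p n f := by
  unfold Mp
  positivity

lemma normTp_nonneg (p : ℝ) (f : T.V → ℂ) : 0 ≤ T.normTp p f :=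
  Real.iSup_nonneg fun n => T.Mp_nonneg p n f

lemma Mp_le_iff {p c : ℝ} (hq : 1 ≤ q) (hp : 0 < p) (hc : 0 ≤ c) (n : ℕ) (f : T.V → ℂ) :
    T.Mp p n f ≤ c ↔ ∑ v ∈ T.levelFinset n, ‖f v‖ ^ p ≤ treeC q n * c ^ p := by
  have hcn : (0 : ℝ) < treeC q n := by exact_mod_cast treeC_pos hq n
  rw [Mp, one_div p, Real.rpow_inv_le_iff_of_pos (by positivity) hc hp, one_div,
    inv_mul_le_iff₀ hcn]

lemma sum_rpow_le_treeC_mul_normTp {p : ℝ} (hq : 1 ≤ q) (hp : 0 < p) {f : T.V → ℂ}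
    (hf : T.memTp p f) (n : ℕ) :
    ∑ v ∈ T.levelFinset n, ‖f v‖ ^ p ≤ treeC q n * T.normTp p f ^ p :=
  (T.Mp_le_iff hq hp (T.normTp_nonneg p f) n f).1 (le_ciSup hf n)

lemma sum_levelFinset_comp_le {phi : T.V → T.V} (hinj : Function.Injective phi) {M : ℕ}
    (hle : ∀ v, T.level (phi v) ≤ T.level v + M) {g : T.V → ℝ} (hg : ∀ w, 0 ≤ g w)
    (n : ℕ) : ∑ v ∈ T.levelFinset n, g (phi v) ≤
      ∑ m ∈ Finset.range (n + M + 1), ∑ w ∈ T.levelFinset m, g w := by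
  rw [← Finset.sum_image fun _ _ _ _ h => hinj h,
    ← Finset.sum_biUnion (T.pairwiseDisjoint_levelFinset _)]
  refine Finset.sum_le_sum_of_subset_of_nonneg ?_ fun w _ _ => hg w
  intro w hw
  obtain ⟨v, hv, rfl⟩ := Finset.mem_image.1 hw
  have := hle v
  have := (T.mem_levelFinset).1 hv
  exact Finset.mem_biUnion.2 ⟨_, Finset.mem_range.2 (by omega), (T.mem_levelFinset).2 rfl⟩

lemma sum_comp_rpow_le {p : ℝ} (hq : 2 ≤ q) (hp : 0 < p) {phi : T.V → T.V}
    (hinj : Function.Injective phi) {M : ℕ} (hle : ∀ v, T.level (phi v) ≤ T.level v + M)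
    {f : T.V → ℂ} (hf : T.memTp p f) (n : ℕ) :
    ∑ v ∈ T.levelFinset n, ‖f (phi v)‖ ^ p ≤
      treeC q n * (2 * (q + 1) * q ^ M * T.normTp p f ^ p) := by
  have hq1 : 1 ≤ q := by omega
  have hcount : (∑ m ∈ Finset.range (n + M + 1), treeC q m : ℝ) ≤
      2 * (q + 1) * q ^ M * treeC q n := by
    have := (sum_range_treeC_le hq (n + M)).trans
      (Nat.mul_le_mul_left 2 (treeC_add_le hq1 n M))
    calc (∑ m ∈ Finset.range (n + M + 1), treeC q m : ℝ)
        ≤ ((2 * ((q + 1) * q ^ M * treeC q n) : ℕ) : ℝ) := by exact_mod_cast this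
      _ = 2 * (q + 1) * q ^ M * treeC q n := by push_cast; ring
  calc ∑ v ∈ T.levelFinset n, ‖f (phi v)‖ ^ p
      ≤ ∑ m ∈ Finset.range (n + M + 1), ∑ w ∈ T.levelFinset m, ‖f w‖ ^ p :=
        T.sum_levelFinset_comp_le hinj hle (fun w => Real.rpow_nonneg (norm_nonneg _) p) n
    _ ≤ ∑ m ∈ Finset.range (n + M + 1), treeC q m * T.normTp p f ^ p :=
        Finset.sum_le_sum fun m _ => T.sum_rpow_le_treeC_mul_normTp hq1 hp hf m
    _ = (∑ m ∈ Finset.range (n + M + 1), treeC q m : ℝ) * T.normTp p f ^ p := by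
        rw [Finset.sum_mul]
    _ ≤ 2 * (q + 1) * q ^ M * treeC q n * T.normTp p f ^ p :=
        mul_le_mul_of_nonneg_right hcount (Real.rpow_nonneg (T.normTp_nonneg p f) p)
    _ = treeC q n * (2 * (q + 1) * q ^ M * T.normTp p f ^ p) := by ring

lemma Mp_comp_le {p : ℝ} (hq : 2 ≤ q) (hp : 0 < p) {phi : T.V → T.V}
    (hinj : Function.Injective phi) {M : ℕ} (hle : ∀ v, T.level (phi v) ≤ T.level v + M)
    {f : T.V → ℂ} (hf : T.memTp p f) (n : ℕ) :
    T.Mp p n (f ∘ phi) ≤ (2 * (q + 1) * q ^ M : ℝ) ^ p⁻¹ * T.normTp p f := by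
  have hB := T.normTp_nonneg p f
  rw [T.Mp_le_iff (by omega) hp (by positivity), Real.mul_rpow (by positivity) hB,
    Real.rpow_inv_rpow (by positivity) hp.ne']
  exact T.sum_comp_rpow_le hq hp hinj hle hf n

lemma boundedCompTp_of_level_le {p : ℝ} (hq : 2 ≤ q) (hp : 0 < p) {phi : T.V → T.V}
    (hinj : Function.Injective phi) {M : ℕ} (hle : ∀ v, T.level (phi v) ≤ T.level v + M) :
    T.BoundedCompTp p phi :=
  ⟨fun _ hf => ⟨_, Set.forall_mem_range.2 (T.Mp_comp_le hq hp hinj hle hf)⟩,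
    _, fun _ hf => ciSup_le (T.Mp_comp_le hq hp hinj hle hf)⟩

def normalizedDelta (p : ℝ) (w : T.V) : T.V → ℂ :=
  Pi.single w (((treeC q (T.level w) : ℝ) ^ p⁻¹ : ℝ) : ℂ)

lemma norm_rpow_normalizedDelta {p : ℝ} (hp : p ≠ 0) (w u : T.V) :
    ‖T.normalizedDelta p w u‖ ^ p = if u = w then (treeC q (T.level w) : ℝ) else 0 := by
  unfold normalizedDelta
  split_ifs with h
  · subst h
    rw [Pi.single_eq_same, Complex.norm_real, Real.norm_of_nonneg (by positivity),
      Real.rpow_inv_rpow (by positivity) hp]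
  · rw [Pi.single_eq_of_ne h, norm_zero, Real.zero_rpow hp]

lemma Mp_normalizedDelta {p : ℝ} (hq : 1 ≤ q) (hp : 0 < p) (w : T.V) (n : ℕ) :
    T.Mp p n (T.normalizedDelta p w) = if n = T.level w then 1 else 0 := by
  simp only [Mp, T.norm_rpow_normalizedDelta hp.ne', Finset.sum_ite_eq', T.mem_levelFinset]
  rcases eq_or_ne n (T.level w) with rfl | h
  · have hc : (treeC q (T.level w) : ℝ) ≠ 0 := by exact_mod_cast (treeC_pos hq _).ne'
    rw [if_pos rfl, if_pos rfl, one_div_mul_cancel hc, Real.one_rpow]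
  · rw [if_neg (Ne.symm h), if_neg h, mul_zero, Real.zero_rpow (by positivity)]

lemma memTp_normalizedDelta {p : ℝ} (hq : 1 ≤ q) (hp : 0 < p) (w : T.V) :
    T.memTp p (T.normalizedDelta p w) :=
  ⟨1, Set.forall_mem_range.2 fun n => by
    rw [T.Mp_normalizedDelta hq hp]
    split_ifs <;> norm_num⟩

lemma normTp_normalizedDelta {p : ℝ} (hq : 1 ≤ q) (hp : 0 < p) (w : T.V) :
    T.normTp p (T.normalizedDelta p w) = 1 :=
  le_antisymm
    (ciSup_le fun n => by rw [T.Mp_normalizedDelta hq hp]; split_ifs <;> norm_num)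
    (by
      have := le_ciSup (T.memTp_normalizedDelta hq hp w) (T.level w)
      rwa [T.Mp_normalizedDelta hq hp, if_pos rfl] at this)

lemma exists_treeC_level_comp_le {p : ℝ} (hq : 1 ≤ q) (hp : 0 < p) {phi : T.V → T.V}
    (h : T.BoundedCompTp p phi) :
    ∃ C : ℝ, ∀ v, (treeC q (T.level (phi v)) : ℝ) ≤ C * treeC q (T.level v) := by
  obtain ⟨hmap, C, hC⟩ := h
  refine ⟨C ^ p, fun v => ?_⟩
  set δ := T.normalizedDelta p (phi v)
  have hδ := T.memTp_normalizedDelta hq hp (phi v)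
  have hnorm : T.normTp p (δ ∘ phi) ≤ C := by
    simpa only [δ, T.normTp_normalizedDelta hq hp, mul_one] using hC δ hδ
  have hbound : T.Mp p (T.level v) (δ ∘ phi) ≤ C := (le_ciSup (hmap δ hδ) _).trans hnorm
  have hsum := (T.Mp_le_iff hq hp ((T.Mp_nonneg _ _ _).trans hbound) _ _).1 hbound
  calc (treeC q (T.level (phi v)) : ℝ) = ‖δ (phi v)‖ ^ p := by
        rw [T.norm_rpow_normalizedDelta hp.ne', if_pos rfl]
    _ ≤ ∑ u ∈ T.levelFinset (T.level v), ‖(δ ∘ phi) u‖ ^ p :=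
        Finset.single_le_sum (f := fun u => ‖(δ ∘ phi) u‖ ^ p)
          (fun u _ => Real.rpow_nonneg (norm_nonneg _) p) ((T.mem_levelFinset).2 rfl)
    _ ≤ C ^ p * treeC q (T.level v) := by rwa [mul_comm] at hsum

end HomTree

/-- For `q ≥ 2`, `1 ≤ p < ∞` and an injective self-map `φ`, `C_φ` is bounded on `T_p`
iff there is `M > 0` with `|φ v| ≤ |v| + M` for all `v`. -/
theorem bounded_comp_Tp_iff_of_injective (q : ℕ) (hq : 2 ≤ q) (T : HomTree q)
    (p : ℝ) (hp : 1 ≤ p) (phi : T.V → T.V) (hinj : Function.Injective phi) :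
    T.BoundedCompTp p phi ↔
      ∃ M : ℕ, 0 < M ∧ ∀ v : T.V, T.level (phi v) ≤ T.level v + M := by
  have hp0 : 0 < p := one_pos.trans_le hp
  constructor
  · intro hbdd
    obtain ⟨C, hC⟩ := T.exists_treeC_level_comp_le (by omega) hp0 hbdd
    obtain ⟨M, hM, hgrowth⟩ := exists_le_add_of_treeC_le hq C
    exact ⟨M, hM, fun v => hgrowth _ _ (hC v)⟩
  · rintro ⟨M, -, hle⟩
    exact T.boundedCompTp_of_level_le hq hp0 hinj hle
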